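/- arXiv:2303.02585 — 7 statements merged into one kernel-verified Lean document; each statement's English description precedes it below -/
import Mathlib

section
/- Let V be a finite-dimensional real vector space with two inner products g and g̃, C the transfer operator defined by g(CX, Y) = g̃(X, Y), and Q the principal square root of C. Define bilinear forms on endomorphisms of V by G(A, B) = (1/2)·Σᵢ g(A eᵢ, B eᵢ) for any g-orthonormal basis (eᵢ), and G̃(A, B) = (1/2)·Σᵢ g̃(A ẽᵢ, B ẽᵢ) for any g̃-orthonormal basis (ẽᵢ). Then G(A, B) = G̃(Q⁻¹ ∘ A ∘ Q, Q⁻¹ ∘ B ∘ Q) for all endomorphisms A, B of V. -/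
/-!
`Q` is an isometry from `(V, g̃)` to `(V, g)`, since `g̃ x y = g (Q² x) y = g (Q x) (Q y)`.
Hence `g̃ (Q⁻¹ u) (Q⁻¹ v) = g u v`, so the right-hand side is `½ Σᵢ g (A (Q ẽᵢ)) (B (Q ẽᵢ))`,
and `(Q ẽᵢ)` is a `g`-orthonormal family. It remains that `Σᵢ b (fᵢ, fᵢ)` is the same for all
orthonormal families `f`: with `M` the coordinate matrix of `f` in an orthonormal basis,
`M Mᵀ = 1`, so `Mᵀ M = 1` and the sum is `tr (M N Mᵀ) = tr N` for `N` the matrix of `b`.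
-/

open Matrix

namespace LinearMap

variable {R V ι : Type*} [CommRing R] [AddCommGroup V] [Module R V] [Fintype ι] [DecidableEq ι]
  {g : V →ₗ[R] V →ₗ[R] R} {e : Module.Basis ι R V}

theorem apply_eq_dotProduct_repr_of_orthonormal
    (he : ∀ i j, g (e i) (e j) = if i = j then 1 else 0) (x y : V) :
    g x y = e.repr x ⬝ᵥ e.repr y := by
  have hg : toMatrix₂ e e g = 1 := by
    ext i j
    simp [he, one_apply]
  simpa [hg] using apply_eq_dotProduct_toMatrix₂_mulVec e e g x y

theorem sum_apply_self_eq_of_orthonormal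
    (he : ∀ i j, g (e i) (e j) = if i = j then 1 else 0) (f : ι → V)
    (hf : ∀ i j, g (f i) (f j) = if i = j then 1 else 0) (b : V →ₗ[R] V →ₗ[R] R) :
    ∑ i, b (f i) (f i) = ∑ i, b (e i) (e i) := by
  set M : Matrix ι ι R := Matrix.of fun i => e.repr (f i)
  have hM : Mᵀ * M = 1 := mul_eq_one_comm.mp <| by
    ext i j
    rw [one_apply, ← hf, apply_eq_dotProduct_repr_of_orthonormal he]
    rfl
  set N := toMatrix₂ e e b
  calc ∑ i, b (f i) (f i) = Matrix.trace (M * N * Mᵀ) := by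
        refine Finset.sum_congr rfl fun i _ => ?_
        rw [apply_eq_dotProduct_toMatrix₂_mulVec e e b, dotProduct_mulVec]
        rfl
    _ = Matrix.trace (Mᵀ * M * N) := Matrix.trace_mul_cycle ..
    _ = ∑ i, b (e i) (e i) := by
        rw [hM, one_mul]
        simp [Matrix.trace, N]

end LinearMap

theorem stmt_4_general {n : ℕ} (V : Type*) [AddCommGroup V] [Module ℝ V]
    (g gt : V →ₗ[ℝ] V →ₗ[ℝ] ℝ)
    (C : V →ₗ[ℝ] V)
    (hC : ∀ X Y : V, g (C X) Y = gt X Y)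
    (Q : V →ₗ[ℝ] V)
    (hQ_sa : ∀ X Y : V, g (Q X) Y = g X (Q Y))
    (hQ2 : Q ∘ₗ Q = C)
    (Qinv : V →ₗ[ℝ] V)
    (hQinv₂ : Q ∘ₗ Qinv = LinearMap.id)
    (e : Module.Basis (Fin n) ℝ V)
    (he : ∀ i j, g (e i) (e j) = if i = j then 1 else 0)
    (et : Module.Basis (Fin n) ℝ V)
    (het : ∀ i j, gt (et i) (et j) = if i = j then 1 else 0) :
    ∀ A B : V →ₗ[ℝ] V,
      (1/2 : ℝ) * ∑ i : Fin n, g (A (e i)) (B (e i)) =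
      (1/2 : ℝ) * ∑ i : Fin n,
        gt ((Qinv ∘ₗ A ∘ₗ Q) (et i)) ((Qinv ∘ₗ B ∘ₗ Q) (et i)) := by
  have hgt : ∀ x y, gt x y = g (Q x) (Q y) := fun x y => by
    rw [← hC, ← hQ2, LinearMap.comp_apply, hQ_sa]
  have hQQinv : ∀ x, Q (Qinv x) = x := LinearMap.congr_fun hQinv₂
  have hQet : ∀ i j, g (Q (et i)) (Q (et j)) = if i = j then 1 else 0 := fun i j => by
    rw [← hgt, het]
  intro A B
  simp only [LinearMap.comp_apply, hgt, hQQinv]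
  congr 1
  exact (LinearMap.sum_apply_self_eq_of_orthonormal he _ hQet (g.compl₁₂ A B)).symm

/-- With G(A,B) = (1/2)·Σᵢ g(A eᵢ, B eᵢ) for a g-orthonormal basis (eᵢ) and
G̃(A,B) = (1/2)·Σᵢ g̃(A ẽᵢ, B ẽᵢ) for a g̃-orthonormal basis (ẽᵢ), one has
G(A,B) = G̃(Q⁻¹∘A∘Q, Q⁻¹∘B∘Q) for all endomorphisms A, B of V, where Q is the principal
square root of the transfer operator C. -/
theorem stmt_4 {n : ℕ} (V : Type*) [AddCommGroup V] [Module ℝ V] [FiniteDimensional ℝ V]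
    (g gt : V →ₗ[ℝ] V →ₗ[ℝ] ℝ)
    (hg_symm : ∀ X Y : V, g X Y = g Y X)
    (hg_pos : ∀ X : V, X ≠ 0 → 0 < g X X)
    (hgt_symm : ∀ X Y : V, gt X Y = gt Y X)
    (hgt_pos : ∀ X : V, X ≠ 0 → 0 < gt X X)
    (C : V →ₗ[ℝ] V)
    (hC : ∀ X Y : V, g (C X) Y = gt X Y)
    (Q : V →ₗ[ℝ] V)
    (hQ_sa : ∀ X Y : V, g (Q X) Y = g X (Q Y))
    (hQ_pos : ∀ X : V, X ≠ 0 → 0 < g (Q X) X)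
    (hQ2 : Q ∘ₗ Q = C)
    (Qinv : V →ₗ[ℝ] V)
    (hQinv₁ : Qinv ∘ₗ Q = LinearMap.id) (hQinv₂ : Q ∘ₗ Qinv = LinearMap.id)
    (e : Module.Basis (Fin n) ℝ V)
    (he : ∀ i j, g (e i) (e j) = if i = j then 1 else 0)
    (et : Module.Basis (Fin n) ℝ V)
    (het : ∀ i j, gt (et i) (et j) = if i = j then 1 else 0) :
    ∀ A B : V →ₗ[ℝ] V,
      (1/2 : ℝ) * ∑ i : Fin n, g (A (e i)) (B (e i)) =
      (1/2 : ℝ) * ∑ i : Fin n,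
        gt ((Qinv ∘ₗ A ∘ₗ Q) (et i)) ((Qinv ∘ₗ B ∘ₗ Q) (et i)) :=
  stmt_4_general V g gt C hC Q hQ_sa hQ2 Qinv hQinv₂ e he et het
end

section
/- Let V be a finite-dimensional real vector space with two inner products g and g̃, C the transfer operator defined by g(CX, Y) = g̃(X, Y), and Q the principal square root of C. If I is an orthogonal complex structure on (V, g), then Ψ(I) := Q⁻¹ ∘ I ∘ Q is an orthogonal complex structure on (V, g̃); that is, Ψ(I)² = −Id and g̃(Ψ(I)X, Ψ(I)Y) = g̃(X, Y) for all X, Y ∈ V. -/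
/-- If I is an orthogonal complex structure on (V, g), then
Ψ(I) = Q⁻¹∘I∘Q is an orthogonal complex structure on (V, g̃), where Q is the principal
square root of the transfer operator C between the inner products g and g̃. -/
theorem stmt_6 (V : Type*) [AddCommGroup V] [Module ℝ V] [FiniteDimensional ℝ V]
    (g gt : V →ₗ[ℝ] V →ₗ[ℝ] ℝ)
    (hg_symm : ∀ X Y : V, g X Y = g Y X)
    (hg_pos : ∀ X : V, X ≠ 0 → 0 < g X X)
    (hgt_symm : ∀ X Y : V, gt X Y = gt Y X)
    (hgt_pos : ∀ X : V, X ≠ 0 → 0 < gt X X)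
    (C : V →ₗ[ℝ] V)
    (hC : ∀ X Y : V, g (C X) Y = gt X Y)
    (Q : V →ₗ[ℝ] V)
    (hQ_sa : ∀ X Y : V, g (Q X) Y = g X (Q Y))
    (hQ_pos : ∀ X : V, X ≠ 0 → 0 < g (Q X) X)
    (hQ2 : Q ∘ₗ Q = C)
    (Qinv : V →ₗ[ℝ] V)
    (hQinv₁ : Qinv ∘ₗ Q = LinearMap.id) (hQinv₂ : Q ∘ₗ Qinv = LinearMap.id)
    (I : V →ₗ[ℝ] V)
    (hI2 : I ∘ₗ I = -LinearMap.id)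
    (hIg : ∀ X Y : V, g (I X) (I Y) = g X Y) :
    (Qinv ∘ₗ I ∘ₗ Q) ∘ₗ (Qinv ∘ₗ I ∘ₗ Q) = -LinearMap.id ∧
    ∀ X Y : V, gt ((Qinv ∘ₗ I ∘ₗ Q) X) ((Qinv ∘ₗ I ∘ₗ Q) Y) = gt X Y := by
  have hQQinv : ∀ z : V, Q (Qinv z) = z := fun z => congrArg (· z) hQinv₂
  have hQinvQ : ∀ z : V, Qinv (Q z) = z := fun z => congrArg (· z) hQinv₁
  have hII : ∀ z : V, I (I z) = -z := fun z => congrArg (· z) hI2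
  have hQg : ∀ X Y : V, gt X Y = g (Q X) (Q Y) := by
    intro X Y
    rw [← hC, ← hQ2]
    exact hQ_sa (Q X) Y
  constructor
  · ext x
    simp only [LinearMap.comp_apply, LinearMap.neg_apply, LinearMap.id_apply]
    rw [hQQinv, hII, map_neg, hQinvQ]
  · intro X Y
    simp only [LinearMap.comp_apply]
    rw [hQg, hQg X Y, hQQinv, hQQinv, hIg]
end

section
/- Let (V, g) be a real inner product space of finite even dimension 2m ≥ 2, and let Q : V → V be a g-self-adjoint linear map that commutes with every orthogonal complex structure on (V, g). Then Q is a scalar multiple of the identity: Q = c·Id for some real number c. -/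
open scoped RealInnerProductSpace

/-- Construction of an orthogonal complex structure sending a given unit vector `u`
to a unit vector `v` orthogonal to `u`. -/
lemma aux_ocs8 {V : Type*} [NormedAddCommGroup V] [InnerProductSpace ℝ V]
    [FiniteDimensional ℝ V] {m : ℕ} (hm : 1 ≤ m)
    (hdim : Module.finrank ℝ V = 2 * m)
    (g : V →ₗ[ℝ] V →ₗ[ℝ] ℝ) (hgi : ∀ x y : V, g x y = ⟪x, y⟫)
    (u v : V) (hu : ⟪u, u⟫ = 1) (hv : ⟪v, v⟫ = 1) (huv : ⟪u, v⟫ = 0) :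
    ∃ I : V →ₗ[ℝ] V, I ∘ₗ I = -LinearMap.id ∧ (∀ X Y : V, g (I X) (I Y) = g X Y) ∧ I u = v := by
  haveI : NeZero m := ⟨by omega⟩
  set p0 : Fin m × Fin 2 := (0, 0) with hp0
  set p1 : Fin m × Fin 2 := (0, 1) with hp1
  have hp01 : p0 ≠ p1 := by
    rw [hp0, hp1]
    intro h
    have h2 : (0 : Fin 2) = 1 := congrArg Prod.snd h
    exact absurd h2 (by decide)
  set w : Fin m × Fin 2 → V := fun p => if p = p0 then u else if p = p1 then v else 0 with hw
  have hcard : Module.finrank ℝ V = Fintype.card (Fin m × Fin 2) := by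
    simp [hdim, mul_comm]
  have horth : Orthonormal ℝ (({p0, p1} : Set (Fin m × Fin 2)).restrict w) := by
    rw [orthonormal_iff_ite]
    rintro ⟨i, hi⟩ ⟨j, hj⟩
    rcases hi with rfl | hi
    · rcases hj with rfl | hj
      · simpa [hw, Set.restrict] using hu
      · rcases hj with rfl
        simp [hw, hp01, hp01.symm, Subtype.ext_iff, huv, Set.restrict]
    · rcases hi with rfl
      rcases hj with rfl | hj
      · have hvu : (⟪v, u⟫ : ℝ) = 0 := by rw [real_inner_comm]; exact huv
        simp [hw, hp01, hp01.symm, Subtype.ext_iff, hvu, Set.restrict]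
      · rcases hj with rfl
        simpa [hw, hp01.symm, Set.restrict] using hv
  obtain ⟨b, hb⟩ := horth.exists_orthonormalBasis_extension_of_card_eq hcard
  have hbu : b p0 = u := by
    have := hb p0 (by simp)
    simpa [hw] using this
  have hbv : b p1 = v := by
    have := hb p1 (by simp)
    simpa [hw, hp01.symm] using this
  set f : Fin m × Fin 2 → V := fun p => if p.2 = 0 then b (p.1, 1) else -b (p.1, 0) with hf
  set I : V →ₗ[ℝ] V := b.toBasis.constr ℝ f with hI
  have hIb : ∀ p, I (b p) = f p := by
    intro p
    have := b.toBasis.constr_basis ℝ f p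
    simpa [hI] using this
  have hsq : I ∘ₗ I = -LinearMap.id := by
    apply b.toBasis.ext
    intro p
    obtain ⟨k, e⟩ := p
    fin_cases e <;>
      simp [hIb, hf, LinearMap.comp_apply, OrthonormalBasis.coe_toBasis]
  have hbon := orthonormal_iff_ite.mp b.orthonormal
  have hkey : ∀ p q, ⟪I (b p), I (b q)⟫ = ⟪b p, b q⟫ := by
    intro p q
    obtain ⟨k, e⟩ := p
    obtain ⟨l, e'⟩ := q
    fin_cases e <;> fin_cases e' <;>
      simp [hIb, hf, hbon, inner_neg_left, inner_neg_right, Prod.ext_iff]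
  have horthI : ∀ X Y : V, g (I X) (I Y) = g X Y := by
    have hext : g.compl₁₂ I I = g := by
      apply b.toBasis.ext
      intro p
      apply b.toBasis.ext
      intro q
      simp only [LinearMap.compl₁₂_apply, OrthonormalBasis.coe_toBasis, hgi]
      exact hkey p q
    intro X Y
    have := LinearMap.congr_fun (LinearMap.congr_fun hext X) Y
    simpa using this
  refine ⟨I, hsq, horthI, ?_⟩
  have : I (b p0) = f p0 := hIb p0
  rw [hbu] at this
  rw [this]
  simp [hf, hp0, hp1, ← hbv]

/-- If (V, g) has finite even dimension 2m ≥ 2 and Q is a g-self-adjoint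
endomorphism commuting with every orthogonal complex structure on (V, g), then Q is a
scalar multiple of the identity. -/
theorem stmt_8 (V : Type*) [AddCommGroup V] [Module ℝ V] [FiniteDimensional ℝ V]
    (m : ℕ) (hm : 1 ≤ m) (hdim : Module.finrank ℝ V = 2 * m)
    (g : V →ₗ[ℝ] V →ₗ[ℝ] ℝ)
    (hg_symm : ∀ X Y : V, g X Y = g Y X)
    (hg_pos : ∀ X : V, X ≠ 0 → 0 < g X X)
    (Q : V →ₗ[ℝ] V)
    (hQ_sa : ∀ X Y : V, g (Q X) Y = g X (Q Y))
    (hQcomm : ∀ I : V →ₗ[ℝ] V,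
      I ∘ₗ I = -LinearMap.id → (∀ X Y : V, g (I X) (I Y) = g X Y) → Q ∘ₗ I = I ∘ₗ Q) :
    ∃ c : ℝ, Q = c • LinearMap.id := by
  classical
  have hg_nonneg : ∀ X : V, 0 ≤ g X X := by
    intro X
    rcases eq_or_ne X 0 with h | h
    · simp [h]
    · exact (hg_pos X h).le
  letI core : InnerProductSpace.Core ℝ V :=
  { inner := fun x y => g x y
    conj_inner_symm := by intro x y; simpa using hg_symm y x
    re_inner_nonneg := by intro x; simpa using hg_nonneg x
    definite := by
      intro x hx
      by_contra h
      exact (hg_pos x h).ne' hx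
    add_left := by intro x y z; simp
    smul_left := by intro x y r; simp }
  letI : NormedAddCommGroup V := core.toNormedAddCommGroup
  letI : InnerProductSpace ℝ V := InnerProductSpace.ofCore core.toCore
  have hgi : ∀ x y : V, g x y = ⟪x, y⟫ := fun _ _ => rfl
  -- main orthogonality fact
  have hQ_orth_unit : ∀ u v : V, ⟪u, u⟫ = 1 → ⟪v, v⟫ = 1 → ⟪u, v⟫ = 0 →
      g (Q u) v = 0 := by
    intro u v hu hv huv
    obtain ⟨I, hsq, hIorth, hIu⟩ := aux_ocs8 hm hdim g hgi u v hu hv huv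
    have hcomm := hQcomm I hsq hIorth
    have hQv : Q v = I (Q u) := by
      have := LinearMap.congr_fun hcomm u
      simpa [LinearMap.comp_apply, hIu] using this
    have hIIQu : I (I (Q u)) = -(Q u) := by
      have := LinearMap.congr_fun hsq (Q u)
      simpa [LinearMap.comp_apply] using this
    have h1 : g (Q u) v = g u (Q v) := hQ_sa u v
    have h2 : g u (I (Q u)) = -g (Q u) v := by
      have h3 : g (I u) (I (I (Q u))) = g u (I (Q u)) := hIorth u (I (Q u))
      rw [hIu, hIIQu] at h3
      rw [← h3]
      simp [hg_symm v (Q u)]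
    rw [h1, hQv, h2] at *
    linarith [h1, h2]
  -- remove normalization
  have hQ_orth : ∀ u v : V, g u v = 0 → g (Q u) v = 0 := by
    intro u v huv
    rcases eq_or_ne u 0 with rfl | hu0
    · simp
    rcases eq_or_ne v 0 with rfl | hv0
    · simp
    set a : ℝ := (Real.sqrt (g u u))⁻¹ with ha
    set bb : ℝ := (Real.sqrt (g v v))⁻¹ with hbb
    have hgu : 0 < g u u := hg_pos u hu0
    have hgv : 0 < g v v := hg_pos v hv0
    have hsu : Real.sqrt (g u u) > 0 := Real.sqrt_pos.mpr hgu
    have hsv : Real.sqrt (g v v) > 0 := Real.sqrt_pos.mpr hgv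
    have hau : ⟪a • u, a • u⟫ = 1 := by
      rw [← hgi]
      simp only [map_smul, LinearMap.smul_apply, smul_eq_mul]
      rw [ha]
      field_simp
      rw [Real.sq_sqrt hgu.le]
    have hbv : ⟪bb • v, bb • v⟫ = 1 := by
      rw [← hgi]
      simp only [map_smul, LinearMap.smul_apply, smul_eq_mul]
      rw [hbb]
      field_simp
      rw [Real.sq_sqrt hgv.le]
    have habuv : ⟪a • u, bb • v⟫ = 0 := by
      rw [← hgi]
      simp [huv]
    have := hQ_orth_unit (a • u) (bb • v) hau hbv habuv
    simp only [map_smul, LinearMap.smul_apply, smul_eq_mul] at this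
    have ha0 : a ≠ 0 := by positivity
    have hb0 : bb ≠ 0 := by positivity
    have := mul_ne_zero ha0 hb0
    rcases mul_eq_zero.mp (by linarith [this] : a * (bb * g (Q u) v) = 0) with h | h
    · exact absurd h ha0
    rcases mul_eq_zero.mp h with h' | h'
    · exact absurd h' hb0
    · exact h'
  -- every vector is an eigenvector
  have heig : ∀ u : V, ∃ c : ℝ, Q u = c • u := by
    intro u
    rcases eq_or_ne u 0 with rfl | hu0
    · exact ⟨0, by simp⟩
    have hgu : 0 < g u u := hg_pos u hu0
    set c : ℝ := g (Q u) u / g u u with hc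
    refine ⟨c, ?_⟩
    set w : V := Q u - c • u with hwdef
    have hwu : g w u = 0 := by
      simp only [hwdef, map_sub, map_smul, LinearMap.sub_apply, LinearMap.smul_apply,
        smul_eq_mul]
      rw [hc]
      field_simp
      ring
    have hwx : ∀ x : V, g w x = 0 := by
      intro x
      set t : ℝ := g u x / g u u with ht
      have hx : x = t • u + (x - t • u) := by abel
      have hperp : g u (x - t • u) = 0 := by
        simp only [map_sub, map_smul, smul_eq_mul]
        rw [ht]
        field_simp
        ring
      have hQperp : g (Q u) (x - t • u) = 0 := hQ_orth u (x - t • u) hperp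
      have hwperp : g w (x - t • u) = 0 := by
        have h1 : g w (x - t • u) = g (Q u) (x - t • u) - c * g u (x - t • u) := by
          simp [hwdef, smul_eq_mul]
        rw [h1, hQperp, hperp, mul_zero, sub_zero]
      calc g w x = g w (t • u + (x - t • u)) := by rw [← hx]
        _ = t * g w u + g w (x - t • u) := by rw [map_add, map_smul]; simp [smul_eq_mul]
        _ = 0 := by rw [hwu, hwperp]; ring
    have hw0 : w = 0 := by
      by_contra h
      exact (hg_pos w h).ne' (hwx w)
    exact sub_eq_zero.mp hw0
  -- conclude Q is a scalar
  have hnt : Nontrivial V := Module.finrank_pos_iff (R := ℝ) |>.mp (by rw [hdim]; omega)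
  obtain ⟨u0, hu0⟩ := exists_ne (0 : V)
  obtain ⟨c, hc⟩ := heig u0
  refine ⟨c, ?_⟩
  ext x
  simp only [LinearMap.smul_apply, LinearMap.id_apply]
  rcases eq_or_ne x 0 with rfl | hx0
  · simp
  obtain ⟨cx, hcx⟩ := heig x
  obtain ⟨c', hc'⟩ := heig (u0 + x)
  by_cases hdep : ∃ a : ℝ, x = a • u0
  · obtain ⟨a, rfl⟩ := hdep
    rw [map_smul, hc, smul_comm]
  · have hsum : c • u0 + cx • x = c' • u0 + c' • x := by
      have h := hc'
      rw [map_add, hc, hcx, smul_add] at h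
      exact h
    have hkey : (c - c') • u0 = (c' - cx) • x := by
      have h2 : (c - c') • u0 - (c' - cx) • x
          = (c • u0 + cx • x) - (c' • u0 + c' • x) := by module
      rw [hsum, sub_self] at h2
      exact sub_eq_zero.mp h2
    rcases eq_or_ne c c' with hcc | hcc
    · have hz : (c' - cx) • x = 0 := by rw [← hkey, hcc, sub_self, zero_smul]
      rcases smul_eq_zero.mp hz with h | h
      · have hcxc : cx = c' := by linarith [h]
        rw [hcx, hcxc, ← hcc]
      · exact absurd h hx0
    · exfalso
      set s : ℝ := (c - c')⁻¹ * (c' - cx) with hsdef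
      have hs : u0 = s • x := by
        rw [hsdef, mul_smul, ← hkey, smul_smul, inv_mul_cancel₀ (sub_ne_zero.mpr hcc), one_smul]
      have hs0 : s ≠ 0 := by
        intro h
        rw [h, zero_smul] at hs
        exact hu0 hs
      exact hdep ⟨s⁻¹, by rw [hs, smul_smul, inv_mul_cancel₀ hs0, one_smul]⟩
end

section
/- Let (V, g) be a real inner product space of finite dimension at least 4, let I be an orthogonal complex structure on (V, g), and let v ∈ V. If for all X, Y ∈ V one has g(IY, v)·IX + g(Y, v)·X − g(X, Y)·v − g(X, IY)·Iv = 0, then v = 0. -/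
/-- If dim V ≥ 4, I is an orthogonal complex structure on (V, g), v ∈ V, and
g(IY,v)·IX + g(Y,v)·X − g(X,Y)·v − g(X,IY)·Iv = 0 for all X, Y, then v = 0. -/
theorem stmt_9 (V : Type*) [AddCommGroup V] [Module ℝ V] [FiniteDimensional ℝ V]
    (hdim : 4 ≤ Module.finrank ℝ V)
    (g : V →ₗ[ℝ] V →ₗ[ℝ] ℝ)
    (hg_symm : ∀ X Y : V, g X Y = g Y X)
    (hg_pos : ∀ X : V, X ≠ 0 → 0 < g X X)
    (I : V →ₗ[ℝ] V)
    (hI2 : I ∘ₗ I = -LinearMap.id)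
    (hIg : ∀ X Y : V, g (I X) (I Y) = g X Y)
    (v : V)
    (hyp : ∀ X Y : V,
      g (I Y) v • I X + g Y v • X - g X Y • v - g X (I Y) • I v = 0) :
    v = 0 := by
  -- the map X ↦ (g X v, g X (I v)) has nontrivial kernel since dim ≥ 4
  set f : V →ₗ[ℝ] ℝ × ℝ := ((g.flip v).prod (g.flip (I v))) with hf
  have hker : 0 < Module.finrank ℝ (LinearMap.ker f) := by
    have h1 := LinearMap.finrank_range_add_finrank_ker f
    have h2 : Module.finrank ℝ (LinearMap.range f) ≤ Module.finrank ℝ (ℝ × ℝ) :=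
      Submodule.finrank_le _
    have h3 : Module.finrank ℝ (ℝ × ℝ) = 2 := by simp
    omega
  have hne : LinearMap.ker f ≠ ⊥ := fun hbot => by
    rw [hbot] at hker; simp at hker
  obtain ⟨X, hXmem, hX0⟩ := Submodule.exists_mem_ne_zero_of_ne_bot hne
  have hfX : f X = 0 := LinearMap.mem_ker.mp hXmem
  rw [hf] at hfX
  simp only [LinearMap.prod_apply, Function.prod, LinearMap.flip_apply, Prod.mk_eq_zero] at hfX
  have hXv : g X v = 0 := hfX.1
  have hXIv : g X (I v) = 0 := hfX.2
  have hII : ∀ w : V, I (I w) = -w := by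
    intro w
    have := LinearMap.congr_fun hI2 w
    simpa using this
  have hIXv : g (I X) v = 0 := by
    have : g (I X) (I (I v)) = g X (I v) := hIg X (I v)
    rw [hII v] at this
    have h' : g (I X) (-v) = 0 := by rw [this]; exact hXIv
    simpa using h'
  have hXIX : g X (I X) = 0 := by
    have h1 : g (I X) (I (I X)) = g X (I X) := hIg X (I X)
    rw [hII X] at h1
    rw [map_neg] at h1
    have h3 := hg_symm (I X) X
    linarith
  have key := hyp X X
  rw [hIXv, hXv, hXIX] at key
  simp only [zero_smul, add_zero, zero_add, sub_zero] at key
  have hgXX : g X X • v = 0 := by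
    have : (0 : V) - g X X • v - 0 = 0 := by simpa using key
    simpa using this
  have hpos := hg_pos X hX0
  have := smul_eq_zero.mp hgXX
  rcases this with h | h
  · exact absurd h (ne_of_gt hpos)
  · exact h
end

section
/- Let (V, g) and (W, g̃) be real inner product spaces of the same finite even dimension 2m ≥ 2, and let f : V → W be a linear isomorphism such that for every orthogonal complex structure I on (V, g), the map f ∘ I ∘ f⁻¹ is an orthogonal complex structure on (W, g̃). Then f is conformal: there exists a constant c > 0 such that g̃(fX, fY) = c·g(X, Y) for all X, Y ∈ V. -/
open Module RealInnerProductSpace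

set_option maxHeartbeats 1000000

/-- Auxiliary: on a real inner product space of even dimension `2*m`, for any
orthonormal pair `u, v` there is an orthogonal complex structure `I` with
`I u = v` and `I v = -u`. -/
lemma aux_ocs_exists {V : Type*} [NormedAddCommGroup V] [InnerProductSpace ℝ V]
    [FiniteDimensional ℝ V] (m : ℕ) (hm : 1 ≤ m) (hdim : finrank ℝ V = 2 * m)
    (u v : V) (hu : ⟪u, u⟫ = 1) (hv : ⟪v, v⟫ = 1) (huv : ⟪u, v⟫ = 0) :
    ∃ I : V →ₗ[ℝ] V, I ∘ₗ I = -LinearMap.id ∧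
      (∀ X Y : V, ⟪I X, I Y⟫ = ⟪X, Y⟫) ∧ I u = v ∧ I v = -u := by
  have h2m : 2 ≤ 2 * m := by omega
  have hvu : ⟪v, u⟫ = 0 := by rw [real_inner_comm]; exact huv
  set i0 : Fin (2 * m) := ⟨0, by omega⟩ with hi0
  set i1 : Fin (2 * m) := ⟨1, by omega⟩ with hi1
  set w : Fin (2 * m) → V := fun i => if i.val = 0 then u else v with hw
  have hcard : finrank ℝ V = Fintype.card (Fin (2 * m)) := by simpa using hdim
  have hun : ‖u‖ = 1 := by
    have h := real_inner_self_eq_norm_sq u; rw [hu] at h; nlinarith [norm_nonneg u]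
  have hvn : ‖v‖ = 1 := by
    have h := real_inner_self_eq_norm_sq v; rw [hv] at h; nlinarith [norm_nonneg v]
  have horth : Orthonormal ℝ (({i0, i1} : Set (Fin (2 * m))).restrict w) := by
    rw [orthonormal_iff_ite]
    rintro ⟨i, hi⟩ ⟨j, hj⟩
    simp only [Set.mem_insert_iff, Set.mem_singleton_iff] at hi hj
    rcases hi with rfl | rfl <;> rcases hj with rfl | rfl <;>
      simp [Set.restrict, hw, hi0, hi1, Subtype.ext_iff, Fin.ext_iff, hu, hv, huv, hvu, hun, hvn]
  obtain ⟨b, hb⟩ := horth.exists_orthonormalBasis_extension_of_card_eq hcard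
  have hb0 : b i0 = u := by
    have := hb i0 (by simp); simpa [hw, hi0] using this
  have hb1 : b i1 = v := by
    have := hb i1 (by simp); simpa [hw, hi0, hi1] using this
  -- pairing map on indices
  have hpar : ∀ i : Fin (2 * m), Even i.val → i.val + 1 < 2 * m := by
    rintro i he
    rcases Nat.lt_or_ge (i.val + 1) (2 * m) with h | h
    · exact h
    · exfalso
      have : i.val = 2 * m - 1 := by omega
      have : ¬ Even i.val := by
        rw [this]; rintro ⟨k, hk⟩; omega
      exact this he
  set p : Fin (2 * m) → Fin (2 * m) := fun i =>
    if he : Even i.val then ⟨i.val + 1, hpar i he⟩ else ⟨i.val - 1, by omega⟩ with hp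
  set ε : Fin (2 * m) → ℝ := fun i => if Even i.val then 1 else -1 with hε
  have hpp : ∀ i, p (p i) = i := by
    intro i
    by_cases he : Even i.val
    · have h1 : ¬ Even (i.val + 1) := by simp [Nat.even_add_one, he]
      simp [hp, he, h1, Fin.ext_iff]
    · have hpos : 1 ≤ i.val := by
        rcases Nat.eq_zero_or_pos i.val with h | h
        · exact (he (by rw [h]; exact ⟨0, rfl⟩)).elim
        · omega
      have h1 : Even (i.val - 1) := by
        rcases Nat.even_or_odd i.val with h | h
        · exact absurd h he
        · rcases h with ⟨k, hk⟩; exact ⟨k, by omega⟩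
      simp [hp, he, h1, Fin.ext_iff]
      omega
  have hεp : ∀ i, ε i * ε (p i) = -1 := by
    intro i
    by_cases he : Even i.val
    · have h1 : ¬ Even (i.val + 1) := by simp [Nat.even_add_one, he]
      simp [hε, hp, he, h1]
    · have hpos : 1 ≤ i.val := by
        rcases Nat.eq_zero_or_pos i.val with h | h
        · exact (he (by rw [h]; exact ⟨0, rfl⟩)).elim
        · omega
      have h1 : Even (i.val - 1) := by
        rcases Nat.even_or_odd i.val with h | h
        · exact absurd h he
        · rcases h with ⟨k, hk⟩; exact ⟨k, by omega⟩
      simp [hε, hp, he, h1]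
  have hpinj : Function.Injective p := by
    intro i j hij
    have := congrArg p hij
    rwa [hpp, hpp] at this
  set I : V →ₗ[ℝ] V := b.toBasis.constr ℝ (fun i => ε i • b (p i)) with hI
  have hIb : ∀ i, I (b i) = ε i • b (p i) := by
    intro i
    have : I (b.toBasis i) = ε i • b (p i) := b.toBasis.constr_basis ℝ _ i
    simpa using this
  have hinner : ∀ i j, ⟪b i, b j⟫ = if i = j then 1 else 0 :=
    orthonormal_iff_ite.mp b.orthonormal
  refine ⟨I, ?_, ?_, ?_, ?_⟩
  · apply b.toBasis.ext
    intro i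
    simp only [LinearMap.comp_apply, OrthonormalBasis.coe_toBasis, LinearMap.neg_apply,
      LinearMap.id_apply]
    rw [hIb, map_smul, hIb, smul_smul, hpp, hεp]
    simp
  · intro X Y
    have key : ∀ i j, ⟪I (b i), I (b j)⟫ = ⟪b i, b j⟫ := by
      intro i j
      rw [hIb, hIb, real_inner_smul_left, real_inner_smul_right, hinner, hinner]
      by_cases hij : i = j
      · subst hij
        by_cases he : Even i.val <;> simp [hε, he]
      · have : p i ≠ p j := fun h => hij (hpinj h)
        simp [hij, this]
    -- extend by bilinearity
    have hXY : X = ∑ i, b.repr X i • b i := by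
      conv_lhs => rw [← b.sum_repr X]
    have hYY : Y = ∑ i, b.repr Y i • b i := by
      conv_lhs => rw [← b.sum_repr Y]
    rw [hXY, hYY]
    simp only [map_sum, map_smul]
    rw [sum_inner, sum_inner]
    congr 1
    funext i
    rw [real_inner_smul_left, real_inner_smul_left]
    congr 1
    rw [inner_sum, inner_sum]
    congr 1
    funext j
    rw [real_inner_smul_right, real_inner_smul_right, key]
  · rw [← hb0, hIb]
    have he : Even (i0 : Fin (2*m)).val := by simp [hi0]
    have : p i0 = i1 := by simp [hp, hi0, hi1, he, Fin.ext_iff]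
    rw [this]
    simp [hε, hi0, he, hb1]
  · rw [← hb1, hIb]
    have he : ¬ Even (i1 : Fin (2*m)).val := by simp [hi1]
    have : p i1 = i0 := by simp [hp, hi0, hi1, he, Fin.ext_iff]
    rw [this]
    simp [hε, hi1, he, hb0]


/-- If f : V → W is a linear isomorphism between real inner product spaces
of the same finite even dimension 2m ≥ 2 such that f∘I∘f⁻¹ is an orthogonal complex
structure on (W, g̃) for every orthogonal complex structure I on (V, g), then f is
conformal: g̃(fX, fY) = c·g(X, Y) for some constant c > 0. -/
theorem stmt_12 (V W : Type*) [AddCommGroup V] [Module ℝ V] [FiniteDimensional ℝ V]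
    [AddCommGroup W] [Module ℝ W] [FiniteDimensional ℝ W]
    (m : ℕ) (hm : 1 ≤ m)
    (hdimV : Module.finrank ℝ V = 2 * m) (hdimW : Module.finrank ℝ W = 2 * m)
    (g : V →ₗ[ℝ] V →ₗ[ℝ] ℝ)
    (hg_symm : ∀ X Y : V, g X Y = g Y X)
    (hg_pos : ∀ X : V, X ≠ 0 → 0 < g X X)
    (gt : W →ₗ[ℝ] W →ₗ[ℝ] ℝ)
    (hgt_symm : ∀ X Y : W, gt X Y = gt Y X)
    (hgt_pos : ∀ X : W, X ≠ 0 → 0 < gt X X)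
    (f : V ≃ₗ[ℝ] W)
    (hf : ∀ I : V →ₗ[ℝ] V,
      I ∘ₗ I = -LinearMap.id → (∀ X Y : V, g (I X) (I Y) = g X Y) →
      ((f.toLinearMap ∘ₗ I ∘ₗ f.symm.toLinearMap) ∘ₗ
          (f.toLinearMap ∘ₗ I ∘ₗ f.symm.toLinearMap) = -LinearMap.id ∧
        ∀ X Y : W, gt ((f.toLinearMap ∘ₗ I ∘ₗ f.symm.toLinearMap) X)
            ((f.toLinearMap ∘ₗ I ∘ₗ f.symm.toLinearMap) Y) = gt X Y)) :
    ∃ c : ℝ, 0 < c ∧ ∀ X Y : V, gt (f X) (f Y) = c * g X Y := by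
  letI core : InnerProductSpace.Core ℝ V :=
    { inner := fun x y => g x y
      conj_inner_symm := fun x y => by simpa using (hg_symm y x)
      re_inner_nonneg := fun x => by
        by_cases hx : x = 0
        · simp [hx]
        · exact le_of_lt (by simpa using hg_pos x hx)
      definite := fun x hx => by
        by_contra h
        exact absurd hx (ne_of_gt (hg_pos x h))
      add_left := fun x y z => by simp
      smul_left := fun x y r => by simp }
  letI : NormedAddCommGroup V := core.toNormedAddCommGroup
  letI : InnerProductSpace ℝ V := InnerProductSpace.ofCore core.toCore
  have ginner : ∀ x y : V, ⟪x, y⟫ = g x y := fun _ _ => rfl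
  set e : OrthonormalBasis (Fin (2 * m)) ℝ V :=
    (stdOrthonormalBasis ℝ V).reindex (finCongr (by rw [hdimV])) with he
  have hone : ∀ i j, ⟪e i, e j⟫ = if i = j then (1 : ℝ) else 0 :=
    orthonormal_iff_ite.mp e.orthonormal
  have hinv : ∀ I : V →ₗ[ℝ] V, I ∘ₗ I = -LinearMap.id →
      (∀ X Y : V, g (I X) (I Y) = g X Y) →
      ∀ X Y : V, gt (f (I X)) (f (I Y)) = gt (f X) (f Y) := by
    intro I h1 h2 X Y
    have := (hf I h1 h2).2 (f X) (f Y)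
    simpa [LinearMap.comp_apply] using this
  set i0 : Fin (2 * m) := ⟨0, by omega⟩ with hi0
  set c : ℝ := gt (f (e i0)) (f (e i0)) with hc
  have hcpos : 0 < c := by
    apply hgt_pos
    simp only [ne_eq, EmbeddingLike.map_eq_zero_iff]
    exact e.orthonormal.ne_zero i0
  have key : ∀ i j, gt (f (e i)) (f (e j)) = c * (if i = j then (1 : ℝ) else 0) := by
    intro i j
    by_cases hij : i = j
    · subst hij
      rw [if_pos rfl, mul_one]
      by_cases hii : i = i0
      · subst hii; rw [hc]
      · obtain ⟨I, hI1, hI2, hIu, hIv⟩ := aux_ocs_exists m hm hdimV (e i0) (e i)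
          (by rw [hone]; simp) (by rw [hone]; simp)
          (by rw [hone]; simp [Ne.symm hii])
        have hg' : ∀ X Y : V, g (I X) (I Y) = g X Y := by
          intro X Y; rw [← ginner, ← ginner]; exact hI2 X Y
        have h1 := hinv I hI1 hg' (e i0) (e i0)
        rw [hIu] at h1
        rw [hc, ← h1]
    · simp only [if_neg hij, mul_zero]
      obtain ⟨I, hI1, hI2, hIu, hIv⟩ := aux_ocs_exists m hm hdimV (e i) (e j)
        (by rw [hone]; simp) (by rw [hone]; simp)
        (by rw [hone]; simp [hij])
      have hg' : ∀ X Y : V, g (I X) (I Y) = g X Y := by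
        intro X Y; rw [← ginner, ← ginner]; exact hI2 X Y
      have h1 := hinv I hI1 hg' (e i) (e j)
      rw [hIu, hIv, map_neg, map_neg] at h1
      have h2 := hgt_symm (f (e j)) (f (e i))
      linarith
  refine ⟨c, hcpos, ?_⟩
  have hBil : gt.compl₁₂ f.toLinearMap f.toLinearMap = c • g := by
    apply e.toBasis.ext
    intro i
    apply e.toBasis.ext
    intro j
    simp only [LinearMap.compl₁₂_apply, LinearMap.smul_apply, smul_eq_mul,
      OrthonormalBasis.coe_toBasis, LinearEquiv.coe_coe]
    rw [key i j, show g (e i) (e j) = if i = j then (1 : ℝ) else 0 from hone i j]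
  intro X Y
  have := LinearMap.congr_fun (LinearMap.congr_fun hBil X) Y
  simpa using this
end

section
/- Every real 4×4 matrix A in SO(4) (i.e., AᵀA = Id and det A = 1) can be written as a product A = A₁·A₂, where A₁ is of the form with rows (a, −b, −c, −d), (b, a, −d, c), (c, d, a, −b), (d, −c, b, a) and A₂ is of the form with rows (p, −q, −r, −s), (q, p, s, −r), (r, −s, p, q), (s, r, −q, p), for real numbers a, b, c, d, p, q, r, s satisfying a² + b² + c² + d² = 1 and p² + q² + r² + s² = 1. -/
open Matrix

def Lm (a b c d : ℝ) : Matrix (Fin 4) (Fin 4) ℝ := !![a,-b,-c,-d; b,a,-d,c; c,d,a,-b; d,-c,b,a]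
def Rm (p q r s : ℝ) : Matrix (Fin 4) (Fin 4) ℝ := !![p,-q,-r,-s; q,p,s,-r; r,-s,p,q; s,r,-q,p]

lemma Lm_transpose (a b c d : ℝ) : (Lm a b c d)ᵀ = Lm a (-b) (-c) (-d) := by
  ext i j; fin_cases i <;> fin_cases j <;> simp [Lm]

lemma Rm_transpose (p q r s : ℝ) : (Rm p q r s)ᵀ = Rm p (-q) (-r) (-s) := by
  ext i j; fin_cases i <;> fin_cases j <;> simp [Rm]

lemma Lm_mul_conj {a b c d : ℝ} (h : a^2+b^2+c^2+d^2 = 1) :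
    Lm a b c d * Lm a (-b) (-c) (-d) = 1 := by
  ext i j; fin_cases i <;> fin_cases j <;>
    simp [Lm, mul_apply, Fin.sum_univ_four, Matrix.one_apply] <;>
    (first | ring1 | linear_combination h)

lemma Lm_conj_mul {a b c d : ℝ} (h : a^2+b^2+c^2+d^2 = 1) :
    Lm a (-b) (-c) (-d) * Lm a b c d = 1 := by
  ext i j; fin_cases i <;> fin_cases j <;>
    simp [Lm, mul_apply, Fin.sum_univ_four, Matrix.one_apply] <;>
    (first | ring1 | linear_combination h)

lemma Rm_mul_conj {p q r s : ℝ} (h : p^2+q^2+r^2+s^2 = 1) :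
    Rm p q r s * Rm p (-q) (-r) (-s) = 1 := by
  ext i j; fin_cases i <;> fin_cases j <;>
    simp [Rm, mul_apply, Fin.sum_univ_four, Matrix.one_apply] <;>
    (first | ring1 | linear_combination h)

lemma Rm_conj_mul {p q r s : ℝ} (h : p^2+q^2+r^2+s^2 = 1) :
    Rm p (-q) (-r) (-s) * Rm p q r s = 1 := by
  ext i j; fin_cases i <;> fin_cases j <;>
    simp [Rm, mul_apply, Fin.sum_univ_four, Matrix.one_apply] <;>
    (first | ring1 | linear_combination h)

lemma det_Lm (a b c d : ℝ) : (Lm a b c d).det = (a^2+b^2+c^2+d^2)^2 := by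
  simp [Lm, det_succ_row_zero, Fin.sum_univ_succ, Fin.succAbove, Fin.castSucc,
    Fin.castAdd, Fin.castLE]
  ring

lemma det_Rm (p q r s : ℝ) : (Rm p q r s).det = (p^2+q^2+r^2+s^2)^2 := by
  simp [Rm, det_succ_row_zero, Fin.sum_univ_succ, Fin.succAbove, Fin.castSucc,
    Fin.castAdd, Fin.castLE]
  ring

/-- half-angle lemma -/
lemma half_angle {e g : ℝ} (h : e^2 + g^2 = 1) :
    ∃ x y : ℝ, x^2 + y^2 = 1 ∧ x^2 - y^2 = e ∧ 2*x*y = g := by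
  rcases eq_or_ne e (-1) with he | he
  · refine ⟨0, 1, by norm_num, by norm_num [he], ?_⟩
    have : g^2 = 0 := by rw [he] at h; nlinarith
    have hg : g = 0 := by nlinarith
    simp [hg]
  · have he1 : 1 + e > 0 := by
      rcases lt_or_eq_of_le (show e ≥ -1 by nlinarith) with h1 | h1
      · linarith
      · exact absurd h1.symm he
    set x := Real.sqrt ((1+e)/2) with hx
    have hx2 : x^2 = (1+e)/2 := Real.sq_sqrt (by linarith)
    have hxpos : x > 0 := Real.sqrt_pos.mpr (by linarith)
    refine ⟨x, g/(2*x), ?_, ?_, ?_⟩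
    · field_simp
      nlinarith [hx2]
    · field_simp
      nlinarith [hx2]
    · field_simp

/-- rotation taking the unit imaginary vector (x,y,z) to i by quaternion conjugation -/
lemma rot_to_i {x y z : ℝ} (h : x^2 + y^2 + z^2 = 1) :
    ∃ w0 w1 w2 w3 : ℝ, w0^2 + w1^2 + w2^2 + w3^2 = 1 ∧
      w0*w0*x - 2*w0*w2*z + 2*w0*w3*y + w1*w1*x + 2*w1*w2*y + 2*w1*w3*z - w2*w2*x - w3*w3*x = 1 ∧
      w0*w0*y + 2*w0*w1*z - 2*w0*w3*x - w1*w1*y + 2*w1*w2*x + w2*w2*y + 2*w2*w3*z - w3*w3*y = 0 ∧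
      w0*w0*z - 2*w0*w1*y + 2*w0*w2*x - w1*w1*z + 2*w1*w3*x - w2*w2*z + 2*w2*w3*y + w3*w3*z = 0 := by
  rcases eq_or_ne x (-1) with hx | hx
  · have hyz : y^2 + z^2 = 0 := by rw [hx] at h; nlinarith
    have hy : y = 0 := by nlinarith
    have hz : z = 0 := by nlinarith
    exact ⟨0, 0, 1, 0, by norm_num, by rw [hx, hy, hz]; ring, by rw [hy]; ring, by rw [hz]; ring⟩
  · have hx1 : 1 + x > 0 := by
      rcases lt_or_eq_of_le (show x ≥ -1 by nlinarith) with h1 | h1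
      · linarith
      · exact absurd h1.symm hx
    set n := Real.sqrt (2*(1+x)) with hn
    have hn2 : n^2 = 2*(1+x) := Real.sq_sqrt (by linarith)
    have hnpos : n > 0 := Real.sqrt_pos.mpr (by linarith)
    refine ⟨(1+x)/n, 0, -z/n, y/n, ?_, ?_, ?_, ?_⟩
    · field_simp
      nlinarith [hn2]
    · field_simp
      nlinarith [hn2, h]
    · field_simp
      first | linear_combination (-y)*h | linear_combination y*h
    · field_simp
      first | linear_combination (-z)*h | linear_combination z*h

lemma LR_comm (a b c d p q r s : ℝ) : Lm a b c d * Rm p q r s = Rm p q r s * Lm a b c d := by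
  ext i j; fin_cases i <;> fin_cases j <;>
    simp [Lm, Rm, mul_apply, Fin.sum_univ_four] <;> ring

lemma LR_comm' (a b c d p q r s : ℝ) (X : Matrix (Fin 4) (Fin 4) ℝ) :
    Rm p q r s * (Lm a b c d * X) = Lm a b c d * (Rm p q r s * X) := by
  rw [← mul_assoc, ← LR_comm, mul_assoc]

lemma cancel_left {a b c d : ℝ} (h : a^2+b^2+c^2+d^2 = 1) (M : Matrix (Fin 4) (Fin 4) ℝ) :
    (Lm a b c d * Rm a (-b) (-c) (-d)) * (Lm a (-b) (-c) (-d) * (Rm a b c d * M)) = M := by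
  calc (Lm a b c d * Rm a (-b) (-c) (-d)) * (Lm a (-b) (-c) (-d) * (Rm a b c d * M))
      = Lm a b c d * (Rm a (-b) (-c) (-d) * (Lm a (-b) (-c) (-d) * (Rm a b c d * M))) := by
        simp only [mul_assoc]
    _ = Lm a b c d * (Lm a (-b) (-c) (-d) * (Rm a (-b) (-c) (-d) * (Rm a b c d * M))) := by
        rw [LR_comm']
    _ = (Lm a b c d * Lm a (-b) (-c) (-d)) * ((Rm a (-b) (-c) (-d) * Rm a b c d) * M) := by
        simp only [mul_assoc]
    _ = M := by rw [Lm_mul_conj h, Rm_conj_mul h, one_mul, one_mul]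

set_option maxHeartbeats 3200000 in
lemma grand (u0 u1 u2 u3 w0 w1 w2 w3 h0 h1 : ℝ) :
    Lm u0 u1 u2 u3 * ((Lm w0 w1 w2 w3 * Rm w0 (-w1) (-w2) (-w3)) *
      (Lm h0 h1 0 0 * Rm h0 (-h1) 0 0)) =
    Lm (h0*u0*w0 - h0*u1*w1 - h0*u2*w2 - h0*u3*w3 - h1*u0*w1 - h1*u1*w0 - h1*u2*w3 + h1*u3*w2)
       (h0*u0*w1 + h0*u1*w0 + h0*u2*w3 - h0*u3*w2 + h1*u0*w0 - h1*u1*w1 - h1*u2*w2 - h1*u3*w3)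
       (h0*u0*w2 - h0*u1*w3 + h0*u2*w0 + h0*u3*w1 + h1*u0*w3 + h1*u1*w2 - h1*u2*w1 + h1*u3*w0)
       (h0*u0*w3 + h0*u1*w2 - h0*u2*w1 + h0*u3*w0 - h1*u0*w2 + h1*u1*w3 - h1*u2*w0 - h1*u3*w1) *
    Rm (h0*w0 - h1*w1) (-(h0*w1) - h1*w0) (-(h0*w2) - h1*w3) (-(h0*w3) + h1*w2) := by
  ext i j
  fin_cases i <;> fin_cases j <;>
    simp [Lm, Rm, mul_apply, Fin.sum_univ_four] <;> ring

set_option maxHeartbeats 1600000 in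
/-- van Elfrinkhof's isoclinic decomposition: every A ∈ SO(4) is a product
of a left-isoclinic and a right-isoclinic rotation. -/
theorem stmt_13 (A : Matrix (Fin 4) (Fin 4) ℝ)
    (horth : Aᵀ * A = 1) (hdet : A.det = 1) :
    ∃ a b c d p q r s : ℝ,
      a ^ 2 + b ^ 2 + c ^ 2 + d ^ 2 = 1 ∧
      p ^ 2 + q ^ 2 + r ^ 2 + s ^ 2 = 1 ∧
      A = !![a, -b, -c, -d; b, a, -d, c; c, d, a, -b; d, -c, b, a] *
          !![p, -q, -r, -s; q, p, s, -r; r, -s, p, q; s, r, -q, p] := by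
  have hu : (A 0 0)^2 + (A 1 0)^2 + (A 2 0)^2 + (A 3 0)^2 = 1 := by
    have h := congrFun (congrFun horth 0) 0
    simp [mul_apply, Fin.sum_univ_four, transpose_apply, Matrix.one_apply] at h
    linear_combination h
  set B := Lm (A 0 0) (-(A 1 0)) (-(A 2 0)) (-(A 3 0)) * A with hBdef
  have ht : (Lm (A 0 0) (-(A 1 0)) (-(A 2 0)) (-(A 3 0)))ᵀ
      = Lm (A 0 0) (A 1 0) (A 2 0) (A 3 0) := by
    rw [Lm_transpose]; simp only [neg_neg]
  have hAB : A = Lm (A 0 0) (A 1 0) (A 2 0) (A 3 0) * B := by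
    rw [hBdef, ← mul_assoc, Lm_mul_conj hu, one_mul]
  have hBorth : Bᵀ * B = 1 := by
    rw [hBdef, transpose_mul, ht, mul_assoc,
      ← mul_assoc (Lm (A 0 0) (A 1 0) (A 2 0) (A 3 0)), Lm_mul_conj hu, one_mul, horth]
  have hBdet : B.det = 1 := by
    rw [hBdef, det_mul, det_Lm, hdet, mul_one]
    have : (A 0 0)^2 + (-(A 1 0))^2 + (-(A 2 0))^2 + (-(A 3 0))^2 = 1 := by linear_combination hu
    rw [this, one_pow]
  have hB00 : B 0 0 = 1 := by
    rw [hBdef]; simp [Lm, mul_apply, Fin.sum_univ_four]; linear_combination hu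
  have hB10 : B 1 0 = 0 := by
    rw [hBdef]; simp [Lm, mul_apply, Fin.sum_univ_four]; ring
  have hB20 : B 2 0 = 0 := by
    rw [hBdef]; simp [Lm, mul_apply, Fin.sum_univ_four]; ring
  have hB30 : B 3 0 = 0 := by
    rw [hBdef]; simp [Lm, mul_apply, Fin.sum_univ_four]; ring
  have hB01 : B 0 1 = 0 := by
    have h := congrFun (congrFun hBorth 0) 1
    simp [mul_apply, Fin.sum_univ_four, transpose_apply, Matrix.one_apply,
      hB00, hB10, hB20, hB30] at h
    linarith [h]
  have hv : (B 1 1)^2 + (B 2 1)^2 + (B 3 1)^2 = 1 := by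
    have h := congrFun (congrFun hBorth 1) 1
    simp [mul_apply, Fin.sum_univ_four, transpose_apply, Matrix.one_apply, hB01] at h
    linear_combination h
  obtain ⟨w0, w1, w2, w3, hw, hE1, hE2, hE3⟩ := rot_to_i hv
  set D := Lm w0 (-w1) (-w2) (-w3) * (Rm w0 w1 w2 w3 * B) with hDdef
  have hBD : B = (Lm w0 w1 w2 w3 * Rm w0 (-w1) (-w2) (-w3)) * D := by
    rw [hDdef, cancel_left hw]
  have hwt : (Lm w0 (-w1) (-w2) (-w3))ᵀ = Lm w0 w1 w2 w3 := by
    rw [Lm_transpose]; simp only [neg_neg]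
  have hDorth : Dᵀ * D = 1 := by
    rw [hDdef, transpose_mul, transpose_mul, hwt, Rm_transpose]
    calc (Bᵀ * Rm w0 (-w1) (-w2) (-w3)) * Lm w0 w1 w2 w3 *
          (Lm w0 (-w1) (-w2) (-w3) * (Rm w0 w1 w2 w3 * B))
        = Bᵀ * (Rm w0 (-w1) (-w2) (-w3) * ((Lm w0 w1 w2 w3 * Lm w0 (-w1) (-w2) (-w3)) *
            (Rm w0 w1 w2 w3 * B))) := by simp only [mul_assoc]
      _ = Bᵀ * ((Rm w0 (-w1) (-w2) (-w3) * Rm w0 w1 w2 w3) * B) := by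
            rw [Lm_mul_conj hw, one_mul]; simp only [mul_assoc]
      _ = Bᵀ * B := by rw [Rm_conj_mul hw, one_mul]
      _ = 1 := hBorth
  have hDdet : D.det = 1 := by
    rw [hDdef, det_mul, det_mul, det_Lm, det_Rm, hBdet, mul_one]
    have h1 : w0^2 + (-w1)^2 + (-w2)^2 + (-w3)^2 = 1 := by linear_combination hw
    rw [h1, hw, one_pow]; norm_num
  have hD00 : D 0 0 = 1 := by
    rw [hDdef]
    simp [Lm, Rm, mul_apply, vecMul, dotProduct, Fin.sum_univ_four, hB00, hB10, hB20, hB30]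
    linear_combination hw
  have hD10 : D 1 0 = 0 := by
    rw [hDdef]; simp [Lm, Rm, mul_apply, vecMul, dotProduct, Fin.sum_univ_four, hB00, hB10, hB20, hB30]; ring
  have hD20 : D 2 0 = 0 := by
    rw [hDdef]; simp [Lm, Rm, mul_apply, vecMul, dotProduct, Fin.sum_univ_four, hB00, hB10, hB20, hB30]; ring
  have hD30 : D 3 0 = 0 := by
    rw [hDdef]; simp [Lm, Rm, mul_apply, vecMul, dotProduct, Fin.sum_univ_four, hB00, hB10, hB20, hB30]; ring
  have hD01 : D 0 1 = 0 := by
    rw [hDdef]; simp [Lm, Rm, mul_apply, vecMul, dotProduct, Fin.sum_univ_four, hB01]; ring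
  have hD11 : D 1 1 = 1 := by
    rw [hDdef]; simp [Lm, Rm, mul_apply, vecMul, dotProduct, Fin.sum_univ_four, hB01]
    linear_combination hE1
  have hD21 : D 2 1 = 0 := by
    rw [hDdef]; simp [Lm, Rm, mul_apply, vecMul, dotProduct, Fin.sum_univ_four, hB01]
    linear_combination hE2
  have hD31 : D 3 1 = 0 := by
    rw [hDdef]; simp [Lm, Rm, mul_apply, vecMul, dotProduct, Fin.sum_univ_four, hB01]
    linear_combination hE3
  have hD02 : D 0 2 = 0 := by
    have h := congrFun (congrFun hDorth 0) 2
    simp [mul_apply, Fin.sum_univ_four, transpose_apply, Matrix.one_apply,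
      hD00, hD10, hD20, hD30] at h
    linarith [h]
  have hD03 : D 0 3 = 0 := by
    have h := congrFun (congrFun hDorth 0) 3
    simp [mul_apply, Fin.sum_univ_four, transpose_apply, Matrix.one_apply,
      hD00, hD10, hD20, hD30] at h
    linarith [h]
  have hD12 : D 1 2 = 0 := by
    have h := congrFun (congrFun hDorth 1) 2
    simp [mul_apply, Fin.sum_univ_four, transpose_apply, Matrix.one_apply,
      hD01, hD11, hD21, hD31] at h
    linarith [h]
  have hD13 : D 1 3 = 0 := by
    have h := congrFun (congrFun hDorth 1) 3
    simp [mul_apply, Fin.sum_univ_four, transpose_apply, Matrix.one_apply,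
      hD01, hD11, hD21, hD31] at h
    linarith [h]
  have h22 : (D 2 2)^2 + (D 3 2)^2 = 1 := by
    have h := congrFun (congrFun hDorth 2) 2
    simp [mul_apply, Fin.sum_univ_four, transpose_apply, Matrix.one_apply, hD02, hD12] at h
    linear_combination h
  have h23 : D 2 2 * D 2 3 + D 3 2 * D 3 3 = 0 := by
    have h := congrFun (congrFun hDorth 2) 3
    simp [mul_apply, Fin.sum_univ_four, transpose_apply, Matrix.one_apply,
      hD02, hD12, hD03, hD13] at h
    linear_combination h
  have hdet2 : D 2 2 * D 3 3 - D 2 3 * D 3 2 = 1 := by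
    have h := hDdet
    rw [det_succ_row_zero] at h
    simp [Fin.sum_univ_succ, det_succ_row_zero, Fin.succAbove, Fin.castSucc,
      Fin.castAdd, Fin.castLE, show Fin.succ (0:Fin 3) = (1:Fin 4) from rfl,
      show Fin.succ (1:Fin 3) = (2:Fin 4) from rfl, show Fin.succ (2:Fin 3) = (3:Fin 4) from rfl,
      show Fin.succ (0:Fin 2) = (1:Fin 3) from rfl, show Fin.succ (1:Fin 2) = (2:Fin 3) from rfl,
      show Fin.succ (0:Fin 1) = (1:Fin 2) from rfl, hD00, hD01, hD02, hD03, hD10, hD11, hD12, hD13,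
      hD20, hD21, hD30, hD31] at h
    linear_combination h
  have hh : D 3 3 = D 2 2 := by
    linear_combination (-(D 3 3))*h22 + (D 2 2)*hdet2 + (D 3 2)*h23
  have hf : D 2 3 = -(D 3 2) := by
    linear_combination (D 2 2)*h23 - (D 3 2)*hdet2 - (D 2 3)*h22
  obtain ⟨x0, y0, hxy1, hxy2, hxy3⟩ := half_angle h22
  have hDLR : D = Lm x0 y0 0 0 * Rm x0 (-y0) 0 0 := by
    ext i j
    fin_cases i <;> fin_cases j <;>
      simp [Lm, Rm, mul_apply, Fin.sum_univ_four, hD00, hD01, hD02, hD03, hD10, hD11,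
        hD12, hD13, hD20, hD21, hD30, hD31, hf, hh, vecHead, vecTail] <;>
      (first
        | ring1
        | linear_combination hxy1
        | linear_combination -hxy1
        | linear_combination hxy2
        | linear_combination -hxy2
        | linear_combination hxy3
        | linear_combination -hxy3)
  have hfinal := hAB
  rw [hBD, hDLR, grand] at hfinal
  refine ⟨x0*(A 0 0)*w0 - x0*(A 1 0)*w1 - x0*(A 2 0)*w2 - x0*(A 3 0)*w3 - y0*(A 0 0)*w1 - y0*(A 1 0)*w0 - y0*(A 2 0)*w3 + y0*(A 3 0)*w2, x0*(A 0 0)*w1 + x0*(A 1 0)*w0 + x0*(A 2 0)*w3 - x0*(A 3 0)*w2 + y0*(A 0 0)*w0 - y0*(A 1 0)*w1 - y0*(A 2 0)*w2 - y0*(A 3 0)*w3, x0*(A 0 0)*w2 - x0*(A 1 0)*w3 + x0*(A 2 0)*w0 + x0*(A 3 0)*w1 + y0*(A 0 0)*w3 + y0*(A 1 0)*w2 - y0*(A 2 0)*w1 + y0*(A 3 0)*w0, x0*(A 0 0)*w3 + x0*(A 1 0)*w2 - x0*(A 2 0)*w1 + x0*(A 3 0)*w0 - y0*(A 0 0)*w2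 + y0*(A 1 0)*w3 - y0*(A 2 0)*w0 - y0*(A 3 0)*w1,
    x0*w0 - y0*w1, -(x0*w1) - y0*w0, -(x0*w2) - y0*w3, -(x0*w3) + y0*w2, ?_, ?_, ?_⟩
  · have hr : (x0*(A 0 0)*w0 - x0*(A 1 0)*w1 - x0*(A 2 0)*w2 - x0*(A 3 0)*w3 - y0*(A 0 0)*w1 - y0*(A 1 0)*w0 - y0*(A 2 0)*w3 + y0*(A 3 0)*w2)^2 + (x0*(A 0 0)*w1 + x0*(A 1 0)*w0 + x0*(A 2 0)*w3 - x0*(A 3 0)*w2 + y0*(A 0 0)*w0 - y0*(A 1 0)*w1 - y0*(A 2 0)*w2 - y0*(A 3 0)*w3)^2 + (x0*(A 0 0)*w2 - x0*(A 1 0)*w3 + x0*(A 2 0)*w0 + x0*(A 3 0)*w1 + y0*(A 0 0)*w3 + y0*(A 1 0)*w2 - y0*(A 2 0)*w1 + y0*(A 3 0)*w0)^2 + (x0*(A 0 0)*w3 + x0*(A 1 0)*w2 - x0*(A 2 0)*w1 + x0*(A 3 0)*w0 - y0*(A 0 0)*w2 + y0*(A 1 0)*w3 - y0*(A 2 0)*w0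 - y0*(A 3 0)*w1)^2 =
        ((A 0 0)^2 + (A 1 0)^2 + (A 2 0)^2 + (A 3 0)^2) *
        ((w0^2 + w1^2 + w2^2 + w3^2) * (x0^2 + y0^2)) := by ring
    rw [hr, hu, hw, hxy1]; norm_num
  · have hr : (x0*w0 - y0*w1)^2 + (-(x0*w1) - y0*w0)^2 + (-(x0*w2) - y0*w3)^2 + (-(x0*w3) + y0*w2)^2 =
        (w0^2 + w1^2 + w2^2 + w3^2) * (x0^2 + y0^2) := by ring
    rw [hr, hw, hxy1]; norm_num
  · exact hfinal
end

section
/- Let A be an n×n real symmetric positive-definite matrix, and define L = (A − Id) · ∫₀¹ ((1−λ)·Id + λ·A)⁻¹ dλ (the integral taken entrywise; note (1−λ)·Id + λ·A is invertible for all λ ∈ [0,1]). Then L is a symmetric matrix and exp(L) = A, where exp denotes the matrix exponential. -/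
/-!
Diagonalize `A = U * diagonal μ * Uᵀ` with `U` orthogonal and `μ > 0`. Conjugated diagonals
form an algebra isomorphic to `ℝⁿ`, so inversion, the integral and the exponential all act
eigenvalue-wise, and `L = U * diagonal (log ∘ μ) * Uᵀ` because on each eigenvalue `m` the
integral is elementary: `(m - 1) * ∫₀¹ (1 - t + t m)⁻¹ dt = log m`. This matrix is symmetric
and its exponential is `U * diagonal μ * Uᵀ = A`.
-/

open Matrix MeasureTheory intervalIntegral Unitary NormedSpace

attribute [local instance] Matrix.normedAddCommGroup Matrix.normedSpace

lemma one_sub_add_mul_pos {m t : ℝ} (hm : 0 < m) (ht : t ∈ Set.uIcc 0 1) :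
    0 < 1 - t + t * m := by
  rw [Set.uIcc_of_le zero_le_one] at ht
  rcases ht.2.eq_or_lt with rfl | h
  · simpa using hm
  · nlinarith [mul_nonneg ht.1 hm.le]

lemma Real.sub_one_mul_integral_inv_one_sub_add_mul {m : ℝ} (hm : 0 < m) :
    (m - 1) * ∫ t in (0:ℝ)..1, (1 - t + t * m)⁻¹ = Real.log m := by
  have hderiv : ∀ t ∈ Set.uIcc (0:ℝ) 1,
      HasDerivAt (fun s => Real.log (1 - s + s * m)) ((m - 1) * (1 - t + t * m)⁻¹) t := by
    intro t ht
    have hlin : HasDerivAt (fun s : ℝ => 1 - s + s * m) (m - 1) t :=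
      (((hasDerivAt_id t).const_sub 1).add ((hasDerivAt_id t).mul_const m)).congr_deriv (by ring)
    simpa [div_eq_mul_inv, mul_comm] using hlin.log (one_sub_add_mul_pos hm ht).ne'
  have hcont : ContinuousOn (fun t => (m - 1) * (1 - t + t * m)⁻¹) (Set.uIcc 0 1) :=
    continuousOn_const.mul <|
      ContinuousOn.inv₀ (by fun_prop) fun t ht => (one_sub_add_mul_pos hm ht).ne'
  rw [← intervalIntegral.integral_const_mul,
    integral_eq_sub_of_hasDerivAt hderiv hcont.intervalIntegrable]
  simp

lemma Pi.intervalIntegrable_inv_one_sub_smul_add_smul {ι : Type*} [Fintype ι] {μ : ι → ℝ}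
    (hμ : ∀ i, 0 < μ i) :
    IntervalIntegrable (fun t : ℝ => ((1 - t) • 1 + t • μ)⁻¹) volume 0 1 := by
  refine ContinuousOn.intervalIntegrable (continuousOn_pi.2 fun i => ?_)
  simp only [Pi.inv_apply, Pi.add_apply, Pi.smul_apply, Pi.one_apply, smul_eq_mul, mul_one]
  exact ContinuousOn.inv₀ (by fun_prop) fun t ht => (one_sub_add_mul_pos (hμ i) ht).ne'

lemma Pi.sub_one_mul_integral_inv_eq_log {ι : Type*} [Fintype ι] {μ : ι → ℝ}
    (hμ : ∀ i, 0 < μ i) :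
    (μ - 1) * ∫ t in (0:ℝ)..1, ((1 - t) • 1 + t • μ)⁻¹ = Real.log ∘ μ := by
  funext i
  have hcomp := (ContinuousLinearMap.proj (R := ℝ) (φ := fun _ : ι => ℝ) i
    ).intervalIntegral_comp_comm (intervalIntegrable_inv_one_sub_smul_add_smul hμ)
  simp only [ContinuousLinearMap.proj_apply] at hcomp
  rw [Pi.mul_apply, ← hcomp]
  simpa using Real.sub_one_mul_integral_inv_one_sub_add_mul (hμ i)

lemma Pi.exp_comp_log {ι : Type*} [Finite ι] {μ : ι → ℝ} (hμ : ∀ i, 0 < μ i) :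
    exp (Real.log ∘ μ) = μ := by
  funext i
  simp [← Real.exp_eq_exp_ℝ, Real.exp_log (hμ i)]

namespace Matrix

variable {ι : Type*} [Fintype ι] [DecidableEq ι]

def conjDiagonal (U : unitary (Matrix ι ι ℝ)) : (ι → ℝ) →ₐ[ℝ] Matrix ι ι ℝ :=
  (conjStarAlgAut ℝ _ U).toAlgEquiv.toAlgHom.comp (diagonalAlgHom ℝ)

variable (U : unitary (Matrix ι ι ℝ))

lemma conjDiagonal_apply (v : ι → ℝ) :
    conjDiagonal U v = U * diagonal v * star (U : Matrix ι ι ℝ) :=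
  rfl

lemma transpose_conjDiagonal (v : ι → ℝ) : (conjDiagonal U v)ᵀ = conjDiagonal U v := by
  change (conjStarAlgAut ℝ _ U (diagonal v))ᵀ = conjStarAlgAut ℝ _ U (diagonal v)
  rw [← conjTranspose_eq_transpose_of_trivial, ← star_eq_conjTranspose, ← map_star,
    star_eq_conjTranspose, diagonal_conjTranspose, star_trivial]

lemma exp_conjDiagonal (v : ι → ℝ) : exp (conjDiagonal U v) = conjDiagonal U (exp v) := by
  simpa [conjDiagonal_apply, exp_diagonal] using exp_units_conj (toUnits U) (diagonal v)

lemma inv_conjDiagonal {v : ι → ℝ} (hv : ∀ i, v i ≠ 0) :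
    (conjDiagonal U v)⁻¹ = conjDiagonal U v⁻¹ := by
  refine inv_eq_right_inv ?_
  rw [← map_mul, ← map_one (conjDiagonal U)]
  congr 1
  funext i
  exact mul_inv_cancel₀ (hv i)

lemma intervalIntegral_conjDiagonal {g : ℝ → ι → ℝ} {a b : ℝ}
    (hg : IntervalIntegrable g volume a b) :
    ∫ t in a..b, conjDiagonal U (g t) = conjDiagonal U (∫ t in a..b, g t) :=
  (conjDiagonal U).toLinearMap.toContinuousLinearMap.intervalIntegral_comp_comm hg

lemma PosDef.exists_conjDiagonal {A : Matrix ι ι ℝ} (hA : A.PosDef) :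
    ∃ (U : unitary (Matrix ι ι ℝ)) (μ : ι → ℝ), (∀ i, 0 < μ i) ∧ conjDiagonal U μ = A := by
  refine ⟨hA.1.eigenvectorUnitary, hA.1.eigenvalues, hA.eigenvalues_pos, ?_⟩
  conv_rhs => rw [hA.1.spectral_theorem]
  rfl

lemma sub_one_mul_integral_inv_conjDiagonal {μ : ι → ℝ} (hμ : ∀ i, 0 < μ i) :
    (conjDiagonal U μ - 1) *
        ∫ t in (0:ℝ)..1, ((1 - t) • (1 : Matrix ι ι ℝ) + t • conjDiagonal U μ)⁻¹ =
      conjDiagonal U (Real.log ∘ μ) := by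
  have hinv : Set.EqOn (fun t : ℝ => ((1 - t) • (1 : Matrix ι ι ℝ) + t • conjDiagonal U μ)⁻¹)
      (fun t => conjDiagonal U ((1 - t) • 1 + t • μ)⁻¹) (Set.uIcc 0 1) := by
    intro t ht
    dsimp only
    rw [← map_one (conjDiagonal U), ← map_smul, ← map_smul, ← map_add]
    refine inv_conjDiagonal _ fun i => ?_
    simpa using (one_sub_add_mul_pos (hμ i) ht).ne'
  rw [integral_congr hinv, intervalIntegral_conjDiagonal _
    (Pi.intervalIntegrable_inv_one_sub_smul_add_smul hμ), ← map_one (conjDiagonal U), ← map_sub,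
    ← map_mul, Pi.sub_one_mul_integral_inv_eq_log hμ]

end Matrix

/-- For a symmetric positive-definite matrix A, the matrix
L = (A − Id)·∫₀¹ ((1−λ)Id + λA)⁻¹ dλ is symmetric and exp(L) = A. -/
theorem stmt_15 (n : ℕ) (A : Matrix (Fin n) (Fin n) ℝ)
    (hsymm : Aᵀ = A)
    (hpos : ∀ x : Fin n → ℝ, x ≠ 0 → 0 < x ⬝ᵥ A.mulVec x) :
    (((A - 1) * ∫ t in (0:ℝ)..1,
        ((1 - t) • (1 : Matrix (Fin n) (Fin n) ℝ) + t • A)⁻¹)ᵀ =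
      (A - 1) * ∫ t in (0:ℝ)..1,
        ((1 - t) • (1 : Matrix (Fin n) (Fin n) ℝ) + t • A)⁻¹) ∧
    NormedSpace.exp ((A - 1) * ∫ t in (0:ℝ)..1,
        ((1 - t) • (1 : Matrix (Fin n) (Fin n) ℝ) + t • A)⁻¹) = A := by
  have hA : A.PosDef := .of_dotProduct_mulVec_pos (by simpa [IsHermitian] using hsymm)
    fun x hx => by simpa using hpos x hx
  obtain ⟨U, μ, hμ, rfl⟩ := hA.exists_conjDiagonal
  rw [sub_one_mul_integral_inv_conjDiagonal U hμ]
  exact ⟨transpose_conjDiagonal U _, by rw [exp_conjDiagonal, Pi.exp_comp_log hμ]⟩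
end
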